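/- The number of representations r(n) of a positive integer n as an ordered sum of two squares of integers satisfies r(n) = 4·∑_{d | n} χ₄(d), where χ₄ is the nontrivial Dirichlet character modulo 4. -/

import Mathlib

set_option maxHeartbeats 1000000
set_option synthInstance.maxHeartbeats 400000

open GaussianInt Zsqrtd

local notation "ℤ[i]" => GaussianInt

def gnorm (z : ℤ[i]) : ℕ := z.norm.natAbs

lemma gnorm_coe (z : ℤ[i]) : (gnorm z : ℤ) = z.norm :=
  Int.natAbs_of_nonneg (GaussianInt.norm_nonneg z)

lemma gnorm_mul (x y : ℤ[i]) : gnorm (x * y) = gnorm x * gnorm y := by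
  simp [gnorm, Zsqrtd.norm_mul, Int.natAbs_mul]

lemma gnorm_eq_zero {z : ℤ[i]} : gnorm z = 0 ↔ z = 0 := by
  simp [gnorm, Int.natAbs_eq_zero, GaussianInt.norm_eq_zero]

lemma gnorm_eq_one {z : ℤ[i]} : gnorm z = 1 ↔ IsUnit z := Zsqrtd.norm_eq_one_iff

lemma gnorm_one : gnorm 1 = 1 := gnorm_eq_one.mpr isUnit_one

lemma gnorm_natCast (n : ℕ) : gnorm (n : ℤ[i]) = n * n := by
  simp [gnorm, Zsqrtd.norm_natCast, Int.natAbs_mul]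

lemma gnorm_star (z : ℤ[i]) : gnorm (star z) = gnorm z := by
  simp [gnorm, Zsqrtd.norm_def]

lemma gnorm_pow (z : ℤ[i]) (k : ℕ) : gnorm (z ^ k) = gnorm z ^ k := by
  induction k with
  | zero => simpa using gnorm_one
  | succ k ih => rw [pow_succ, gnorm_mul, ih, pow_succ]

lemma gnorm_dvd {x y : ℤ[i]} (h : x ∣ y) : gnorm x ∣ gnorm y := by
  obtain ⟨c, rfl⟩ := h; exact ⟨gnorm c, gnorm_mul x c⟩

lemma mul_star_eq (z : ℤ[i]) : z * star z = (gnorm z : ℤ[i]) := by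
  have h := Zsqrtd.norm_eq_mul_conj z
  have h1 : ((gnorm z : ℕ) : ℤ) = z.norm := gnorm_coe z
  rw [← h1] at h
  exact_mod_cast h.symm

lemma prime_of_gnorm_prime {z : ℤ[i]} (h : (gnorm z).Prime) : Prime z := by
  rw [← irreducible_iff_prime]
  constructor
  · rw [← gnorm_eq_one]
    exact fun h1 => h.ne_one h1
  · intro a b hab
    have hz : gnorm a * gnorm b = gnorm z := by rw [hab, gnorm_mul]
    rcases (Nat.Prime.eq_one_or_self_of_dvd h (gnorm a) ⟨gnorm b, hz.symm⟩).symm with h1 | h1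
    · right
      rw [← gnorm_eq_one]
      have h2 := hz
      rw [h1] at h2
      have hp := h.pos
      nlinarith
    · left; exact gnorm_eq_one.mp h1

lemma gnorm_assoc {x y : ℤ[i]} (h : Associated x y) : gnorm x = gnorm y := by
  obtain ⟨u, rfl⟩ := h
  rw [gnorm_mul, gnorm_eq_one.mpr u.isUnit, mul_one]

lemma unit_val_eq {z : ℤ[i]} (h : IsUnit z) :
    z = ⟨1,0⟩ ∨ z = ⟨-1,0⟩ ∨ z = ⟨0,1⟩ ∨ z = ⟨0,-1⟩ := by
  have h1 : gnorm z = 1 := gnorm_eq_one.mpr h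
  have h2 : z.norm = 1 := by rw [← gnorm_coe, h1]; rfl
  rcases z with ⟨x, y⟩
  have h3 : x * x + y * y = 1 := by
    have h4 := Zsqrtd.norm_def (⟨x, y⟩ : ℤ[i])
    rw [h2] at h4
    simp at h4
    linarith
  have hx : -1 ≤ x ∧ x ≤ 1 := by constructor <;> nlinarith [mul_self_nonneg x, mul_self_nonneg y]
  have hy : -1 ≤ y ∧ y ≤ 1 := by constructor <;> nlinarith [mul_self_nonneg x, mul_self_nonneg y]
  obtain ⟨hx1, hx2⟩ := hx; obtain ⟨hy1, hy2⟩ := hy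
  simp only [Zsqrtd.ext_iff]
  interval_cases x <;> interval_cases y <;> simp_all

def uI : (ℤ[i])ˣ := ⟨⟨0,1⟩, ⟨0,-1⟩, by ext <;> simp, by ext <;> simp⟩

def ufun : Fin 4 → (ℤ[i])ˣ := ![1, -1, uI, -uI]

lemma ufun_bij : Function.Bijective ufun := by
  constructor
  · intro a b hab
    fin_cases a <;> fin_cases b <;> simp_all [ufun, uI, Units.ext_iff, Zsqrtd.ext_iff]
  · intro u
    rcases unit_val_eq u.isUnit with h | h | h | h
    · exact ⟨0, Units.ext (by simpa [ufun, Zsqrtd.ext_iff] using h.symm)⟩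
    · exact ⟨1, Units.ext (by simpa [ufun, Zsqrtd.ext_iff] using h.symm)⟩
    · exact ⟨2, Units.ext (by simpa [ufun, uI, Zsqrtd.ext_iff] using h.symm)⟩
    · exact ⟨3, Units.ext (by simpa [ufun, uI, Zsqrtd.ext_iff] using h.symm)⟩

lemma card_units_eq : Nat.card (ℤ[i])ˣ = 4 := by
  rw [← Nat.card_eq_of_bijective ufun ufun_bij]
  simp

def anorm : Associates ℤ[i] → ℕ :=
  Quotient.lift gnorm fun _ _ h => gnorm_assoc h

@[simp] lemma anorm_mk (z : ℤ[i]) : anorm (Associates.mk z) = gnorm z := rfl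

lemma anorm_mul (a b : Associates ℤ[i]) : anorm (a * b) = anorm a * anorm b := by
  obtain ⟨x, rfl⟩ := Associates.mk_surjective a
  obtain ⟨y, rfl⟩ := Associates.mk_surjective b
  rw [Associates.mk_mul_mk, anorm_mk, anorm_mk, anorm_mk, gnorm_mul]

lemma anorm_pow (a : Associates ℤ[i]) (k : ℕ) : anorm (a ^ k) = anorm a ^ k := by
  induction k with
  | zero => simpa using congrArg anorm (pow_zero a) |>.trans (by rw [← Associates.mk_one, anorm_mk, gnorm_one])
  | succ k ih => rw [pow_succ, anorm_mul, ih, pow_succ]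

lemma anorm_eq_zero {a : Associates ℤ[i]} : anorm a = 0 ↔ a = 0 := by
  obtain ⟨x, rfl⟩ := Associates.mk_surjective a
  rw [anorm_mk, gnorm_eq_zero, Associates.mk_eq_zero]

lemma anorm_dvd {a b : Associates ℤ[i]} (h : a ∣ b) : anorm a ∣ anorm b := by
  obtain ⟨c, rfl⟩ := h; exact ⟨anorm c, anorm_mul a c⟩

lemma anorm_quot_out (a : Associates ℤ[i]) : gnorm (Quot.out a) = anorm a := by
  conv_rhs => rw [← Associates.quot_out a]
  rw [anorm_mk]

noncomputable def Ifun (n : ℕ) : ℕ := Nat.card {a : Associates ℤ[i] // anorm a = n}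

lemma card_reps (n : ℕ) (hn : 1 ≤ n) :
    Nat.card {z : ℤ[i] // gnorm z = n} = 4 * Ifun n := by
  have hΨ : Function.Bijective
      (fun p : {a : Associates ℤ[i] // anorm a = n} × (ℤ[i])ˣ =>
        (⟨Quot.out p.1.val * p.2, by
          rw [gnorm_mul, anorm_quot_out, p.1.2, gnorm_eq_one.mpr p.2.isUnit, mul_one]⟩ :
          {z : ℤ[i] // gnorm z = n})) := by
    constructor
    · rintro ⟨⟨a, ha⟩, u⟩ ⟨⟨b, hb⟩, v⟩ hab
      simp only [Subtype.mk.injEq] at hab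
      have hout : Quot.out a ≠ 0 := by
        rw [← gnorm_eq_zero.ne, anorm_quot_out, ha]; omega
      have hab' : a = b := by
        have h1 := congrArg Associates.mk hab
        rw [← Associates.mk_mul_mk, ← Associates.mk_mul_mk,
          Associates.mk_eq_one.mpr u.isUnit, Associates.mk_eq_one.mpr v.isUnit, mul_one, mul_one,
          Associates.quot_out, Associates.quot_out] at h1
        exact h1
      subst hab'
      have : (u : ℤ[i]) = v := mul_left_cancel₀ hout hab
      simp [Units.ext_iff, this]
    · rintro ⟨z, hz⟩
      have h1 : Associates.mk (Quot.out (Associates.mk z)) = Associates.mk z :=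
        Associates.quot_out _
      obtain ⟨u, hu⟩ := Associates.mk_eq_mk_iff_associated.mp h1
      exact ⟨⟨⟨Associates.mk z, by rw [anorm_mk, hz]⟩, u⟩, by simpa using hu⟩
  have := Nat.card_congr (Equiv.ofBijective _ hΨ)
  rw [Nat.card_prod, card_units_eq] at this
  rw [← this, Ifun, mul_comm]

lemma star_dvd' {w z : ℤ[i]} (h : w ∣ z) : star w ∣ star z := by
  obtain ⟨c, hc⟩ := h
  exact ⟨star c, by rw [hc, star_mul']⟩

lemma star_dvd_of_dvd_star {w z : ℤ[i]} (h : w ∣ star z) (hw : star w = w) : w ∣ z := by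
  have := star_dvd' h
  rwa [hw, star_star] at this

lemma star_natCast' (n : ℕ) : star ((n : ℤ[i])) = (n : ℤ[i]) := by
  ext <;> simp

lemma split_lemma : ∀ m : ℕ, ∀ n : ℕ, ∀ z : ℤ[i], Nat.Coprime m n → gnorm z = m * n →
    ∃ x y : ℤ[i], z = x * y ∧ gnorm x = m ∧ gnorm y = n := by
  intro m
  induction m using Nat.strong_induction_on with
  | _ m ih =>
    intro n z hco hz
    rcases Nat.eq_zero_or_pos m with rfl | hm
    · have hn1 : n = 1 := by simpa using hco
      subst hn1
      refine ⟨0, 1, ?_, by simpa using gnorm_eq_zero.mpr rfl, gnorm_one⟩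
      rw [mul_one]
      exact gnorm_eq_zero.mp (by simpa using hz)
    rcases Nat.lt_or_ge m 2 with hm2 | hm2
    · interval_cases m
      exact ⟨1, z, by rw [one_mul], gnorm_one, by simpa using hz⟩
    -- m ≥ 2
    set p := m.minFac with hp
    have pp : p.Prime := Nat.minFac_prime (by omega)
    have hpm : p ∣ m := Nat.minFac_dvd m
    have hpn : ¬ p ∣ n := fun hd =>
      Nat.Prime.one_lt pp |>.ne' (Nat.eq_one_of_dvd_coprimes hco hpm hd ▸ rfl)
    -- find a Gaussian prime ρ dividing z with gnorm ρ ∈ {p, p^2}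
    have hzz : (p : ℤ[i]) ∣ z * star z := by
      rw [mul_star_eq, hz]
      exact_mod_cast (Nat.cast_dvd_cast (Dvd.dvd.mul_right hpm n) : ((p:ℕ):ℤ[i]) ∣ ((m*n:ℕ):ℤ[i]))
    by_cases hirr : Irreducible (p : ℤ[i])
    · -- p stays prime; p ∣ z, p^2 ∣ m
      have hpr : Prime (p : ℤ[i]) := hirr.prime
      have hpz : (p : ℤ[i]) ∣ z := by
        rcases hpr.2.2 _ _ hzz with h | h
        · exact h
        · exact star_dvd_of_dvd_star h (star_natCast' p)
      obtain ⟨z', rfl⟩ := hpz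
      have hg : m * n = (p * p) * gnorm z' := by
        rw [← hz, gnorm_mul, gnorm_natCast]
      have hp2m : p * p ∣ m := by
        obtain ⟨m₁, hm₁⟩ := hpm
        have h1 : p ∣ m₁ * n := by
          have : p * (m₁ * n) = p * (p * gnorm z') := by
            rw [← mul_assoc, ← hm₁, hg]; ring
          have h2 := Nat.eq_of_mul_eq_mul_left pp.pos this
          exact ⟨gnorm z', by omega⟩
        have h2 : p ∣ m₁ := (Nat.Prime.dvd_mul pp).mp h1 |>.resolve_right hpn
        obtain ⟨m₂, hm₂⟩ := h2
        exact ⟨m₂, by rw [hm₁, hm₂]; ring⟩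
      obtain ⟨m₂, hm₂⟩ := hp2m
      have hgz' : gnorm z' = m₂ * n := by
        have : (p * p) * (m₂ * n) = (p * p) * gnorm z' := by rw [← mul_assoc, ← hm₂, hg]
        exact (Nat.eq_of_mul_eq_mul_left (Nat.mul_pos pp.pos pp.pos) this).symm
      have hm₂0 : 0 < m₂ := by
        rcases Nat.eq_zero_or_pos m₂ with rfl | h
        · rw [mul_zero] at hm₂; omega
        · exact h
      have hm₂m : m₂ < m := by
        have hp1 := pp.one_lt
        calc m₂ < 4 * m₂ := by omega
        _ ≤ p * p * m₂ := Nat.mul_le_mul_right _ (by nlinarith)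
        _ = m := hm₂.symm
      have hcom₂ : Nat.Coprime m₂ n := Nat.Coprime.coprime_dvd_left ⟨p * p, by rw [hm₂]; ring⟩ hco
      obtain ⟨x', y', rfl, hx', hy'⟩ := ih m₂ hm₂m n z' hcom₂ hgz'
      exact ⟨p * x', y', by ring, by rw [gnorm_mul, gnorm_natCast, hx', hm₂], hy'⟩
    · -- p splits: get prime ρ with gnorm ρ = p and ρ ∣ z
      haveI : Fact p.Prime := ⟨pp⟩
      obtain ⟨a, b, hab⟩ := GaussianInt.sq_add_sq_of_nat_prime_of_not_irreducible p hirr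
      set π : ℤ[i] := ⟨(a : ℤ), (b : ℤ)⟩ with hπ
      have hgπ : gnorm π = p := by
        have : π.norm = (p : ℤ) := by
          rw [Zsqrtd.norm_def]
          push_cast [← hab]
          ring
        rw [gnorm, this]; simp
      have hπp : Prime π := prime_of_gnorm_prime (hgπ ▸ pp)
      have hππ : π * star π = (p : ℤ[i]) := by rw [mul_star_eq, hgπ]
      have hπzz : π ∣ z * star z := dvd_trans ⟨star π, hππ.symm⟩ hzz
      have hρ : ∃ ρ : ℤ[i], Prime ρ ∧ gnorm ρ = p ∧ ρ ∣ z := by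
        rcases hπp.2.2 _ _ hπzz with h | h
        · exact ⟨π, hπp, hgπ, h⟩
        · refine ⟨star π, prime_of_gnorm_prime (by rw [gnorm_star, hgπ]; exact pp), by rw [gnorm_star, hgπ], ?_⟩
          have h2 := star_dvd' h
          rwa [star_star] at h2
      obtain ⟨ρ, hρp, hgρ, hρz⟩ := hρ
      obtain ⟨z', rfl⟩ := hρz
      have hg : m * n = p * gnorm z' := by rw [← hz, gnorm_mul, hgρ]
      obtain ⟨m₁, hm₁⟩ := hpm
      have hgz' : gnorm z' = m₁ * n := by
        have : p * (m₁ * n) = p * gnorm z' := by rw [← mul_assoc, ← hm₁, hg]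
        exact (Nat.eq_of_mul_eq_mul_left pp.pos this).symm
      have hm₁0 : 0 < m₁ := by
        rcases Nat.eq_zero_or_pos m₁ with rfl | h
        · rw [mul_zero] at hm₁; omega
        · exact h
      have hm₁m : m₁ < m := by
        have hp1 := pp.one_lt
        calc m₁ < 2 * m₁ := by omega
        _ ≤ p * m₁ := Nat.mul_le_mul_right _ (by omega)
        _ = m := hm₁.symm
      have hcom₁ : Nat.Coprime m₁ n := Nat.Coprime.coprime_dvd_left ⟨p, by rw [hm₁]; ring⟩ hco
      obtain ⟨x', y', rfl, hx', hy'⟩ := ih m₁ hm₁m n z' hcom₁ hgz'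
      exact ⟨ρ * x', y', by ring, by rw [gnorm_mul, hgρ, hx']; omega, hy'⟩

lemma isCoprime_of_gnorm_coprime {x y : ℤ[i]} (h : Nat.Coprime (gnorm x) (gnorm y))
    (hx : x ≠ 0) : IsCoprime x y := by
  classical
  rw [← EuclideanDomain.gcd_isUnit_iff]
  set g := EuclideanDomain.gcd x y with hg
  have h1 : gnorm g ∣ gnorm x := gnorm_dvd (EuclideanDomain.gcd_dvd_left x y)
  have h2 : gnorm g ∣ gnorm y := gnorm_dvd (EuclideanDomain.gcd_dvd_right x y)
  have h3 : gnorm g ∣ Nat.gcd (gnorm x) (gnorm y) := Nat.dvd_gcd h1 h2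
  have h4 : gnorm g = 1 := Nat.dvd_one.mp (h ▸ h3)
  exact gnorm_eq_one.mp h4

lemma Ifun_mul {m n : ℕ} (hco : Nat.Coprime m n) (hm : 1 ≤ m) (hn : 1 ≤ n) :
    Ifun (m * n) = Ifun m * Ifun n := by
  have hΦ : Function.Bijective
      (fun p : {a : Associates ℤ[i] // anorm a = m} × {b : Associates ℤ[i] // anorm b = n} =>
        (⟨p.1.val * p.2.val, by rw [anorm_mul, p.1.2, p.2.2]⟩ :
          {c : Associates ℤ[i] // anorm c = m * n})) := by
    constructor
    · rintro ⟨⟨a₁, ha₁⟩, ⟨b₁, hb₁⟩⟩ ⟨⟨a₂, ha₂⟩, ⟨b₂, hb₂⟩⟩ h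
      simp only [Subtype.mk.injEq] at h
      obtain ⟨x₁, rfl⟩ := Associates.mk_surjective a₁
      obtain ⟨y₁, rfl⟩ := Associates.mk_surjective b₁
      obtain ⟨x₂, rfl⟩ := Associates.mk_surjective a₂
      obtain ⟨y₂, rfl⟩ := Associates.mk_surjective b₂
      rw [anorm_mk] at ha₁ hb₁ ha₂ hb₂
      have hx₁0 : x₁ ≠ 0 := fun h0 => by rw [h0] at ha₁; rw [gnorm_eq_zero.mpr rfl] at ha₁; omega
      have hx₂0 : x₂ ≠ 0 := fun h0 => by rw [h0] at ha₂; rw [gnorm_eq_zero.mpr rfl] at ha₂; omega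
      have key : ∀ x y x' y' : ℤ[i], gnorm x = m → gnorm y' = n → x ≠ 0 →
          Associated (x * y) (x' * y') → x ∣ x' := by
        intro x y x' y' hx hy' hx0 hass
        have h1 : x ∣ x' * y' := dvd_trans (Dvd.intro y rfl) hass.dvd
        have h2 : IsCoprime x y' :=
          isCoprime_of_gnorm_coprime (by rw [hx, hy']; exact hco) hx0
        exact (IsCoprime.dvd_of_dvd_mul_right h2) h1
      rw [Associates.mk_mul_mk, Associates.mk_mul_mk, Associates.mk_eq_mk_iff_associated] at h
      have hd1 : x₁ ∣ x₂ := key x₁ y₁ x₂ y₂ ha₁ hb₂ hx₁0 h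
      have hd2 : x₂ ∣ x₁ := key x₂ y₂ x₁ y₁ ha₂ hb₁ hx₂0 h.symm
      have hxx : Associates.mk x₁ = Associates.mk x₂ :=
        Associates.mk_eq_mk_iff_associated.mpr (associated_of_dvd_dvd hd1 hd2)
      have hmk0 : Associates.mk x₁ ≠ 0 := by
        rw [Associates.mk_ne_zero]; exact hx₁0
      have hyy : Associates.mk y₁ = Associates.mk y₂ := by
        obtain ⟨u, hu⟩ := associated_of_dvd_dvd hd1 hd2
        obtain ⟨v, hv⟩ := h
        have hcancel : y₁ * ↑v = ↑u * y₂ := by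
          apply mul_left_cancel₀ hx₁0
          calc x₁ * (y₁ * ↑v) = x₁ * y₁ * ↑v := by ring
          _ = x₂ * y₂ := hv
          _ = (x₁ * ↑u) * y₂ := by rw [hu]
          _ = x₁ * (↑u * y₂) := by ring
        rw [Associates.mk_eq_mk_iff_associated]
        refine ⟨v * u⁻¹, ?_⟩
        rw [Units.val_mul]
        calc y₁ * (↑v * ↑u⁻¹) = (y₁ * ↑v) * ↑u⁻¹ := by ring
        _ = (↑u * y₂) * ↑u⁻¹ := by rw [hcancel]
        _ = y₂ * (↑u * ↑u⁻¹) := by ring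
        _ = y₂ := by rw [Units.mul_inv, mul_one]
      simp [Prod.ext_iff, Subtype.ext_iff, hxx, hyy]
    · rintro ⟨c, hc⟩
      obtain ⟨z, rfl⟩ := Associates.mk_surjective c
      rw [anorm_mk] at hc
      obtain ⟨x, y, rfl, hx, hy⟩ := split_lemma m n z hco hc
      exact ⟨⟨⟨Associates.mk x, by rw [anorm_mk, hx]⟩, ⟨Associates.mk y, by rw [anorm_mk, hy]⟩⟩,
        by simp [Associates.mk_mul_mk]⟩
  have := Nat.card_congr (Equiv.ofBijective _ hΦ)
  rw [Nat.card_prod] at this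
  rw [Ifun, Ifun, Ifun, ← this]

lemma isCoprime_of_prime_not_dvd {π z : ℤ[i]} (hπ : Prime π) (h : ¬ π ∣ z) : IsCoprime π z := by
  classical
  rw [← EuclideanDomain.gcd_isUnit_iff]
  obtain ⟨c, hc⟩ := EuclideanDomain.gcd_dvd_left π z
  set g := EuclideanDomain.gcd π z with hg
  rcases hπ.irreducible.isUnit_or_isUnit hc with hg | hc'
  · exact hg
  · exfalso
    apply h
    obtain ⟨cu, hcu⟩ := hc'
    have hπg : π ∣ g :=
      ⟨↑cu⁻¹, by rw [hc, ← hcu, mul_assoc, Units.mul_inv, mul_one]⟩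
    exact hπg.trans (EuclideanDomain.gcd_dvd_right π z)

lemma dvd_mul_prime_pow {π ρ : ℤ[i]} (hπ : Prime π) (hρ : Prime ρ) :
    ∀ (m l : ℕ) (z : ℤ[i]), z ∣ π ^ m * ρ ^ l →
      ∃ i j, i ≤ m ∧ j ≤ l ∧ Associated z (π ^ i * ρ ^ j) := by
  intro m
  induction m with
  | zero =>
    intro l z hz
    rw [pow_zero, one_mul] at hz
    obtain ⟨j, hj, ha⟩ := (dvd_prime_pow hρ l).mp hz
    exact ⟨0, j, le_rfl, hj, by simpa using ha⟩
  | succ m ihm =>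
    intro l z hz
    by_cases hdvd : π ∣ z
    · obtain ⟨z', rfl⟩ := hdvd
      have hz' : z' ∣ π ^ m * ρ ^ l := by
        have h1 : π * z' ∣ π * (π ^ m * ρ ^ l) := by
          rw [← mul_assoc, ← pow_succ']
          exact hz
        exact (mul_dvd_mul_iff_left hπ.ne_zero).mp h1
      obtain ⟨i, j, hi, hj, ha⟩ := ihm l z' hz'
      refine ⟨i + 1, j, by omega, hj, ?_⟩
      have h2 := ha.mul_left π
      rwa [show π * (π ^ i * ρ ^ j) = π ^ (i + 1) * ρ ^ j by ring] at h2
    · have hcop : IsCoprime z (π ^ (m + 1)) :=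
        ((isCoprime_of_prime_not_dvd hπ hdvd).symm).pow_right
      have hzρ : z ∣ ρ ^ l := hcop.dvd_of_dvd_mul_left hz
      obtain ⟨j, hj, ha⟩ := (dvd_prime_pow hρ l).mp hzρ
      exact ⟨0, j, by omega, hj, by simpa using ha⟩

lemma dvd_self_pow {z : ℤ[i]} {N : ℕ} (hz : gnorm z = N) : z ∣ ((N : ℕ) : ℤ[i]) := by
  rw [← hz, ← mul_star_eq]
  exact Dvd.intro _ rfl

lemma Ifun_two_pow (k : ℕ) : Ifun (2 ^ k) = 1 := by
  set π : ℤ[i] := ⟨1, 1⟩ with hπdef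
  have hgπ : gnorm π = 2 := by simp [gnorm, hπdef, Zsqrtd.norm_def]
  have hπ : Prime π := prime_of_gnorm_prime (by rw [hgπ]; exact Nat.prime_two)
  have hustar : star π = π * ⟨0, -1⟩ := by ext <;> simp [hπdef]
  have hu : IsUnit ((⟨0, -1⟩ : ℤ[i])) := gnorm_eq_one.mp (by simp [gnorm, Zsqrtd.norm_def])
  have h2eq : ((2 : ℕ) : ℤ[i]) = π * π * ⟨0, -1⟩ := by
    have h := mul_star_eq π
    rw [hgπ] at h
    rw [← h, hustar]
    ring
  have key : ∀ a : Associates ℤ[i], anorm a = 2 ^ k → a = (Associates.mk π) ^ k := by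
    intro a ha
    obtain ⟨z, rfl⟩ := Associates.mk_surjective a
    rw [anorm_mk] at ha
    have hzd : z ∣ π ^ (2 * k) * (⟨0, -1⟩ : ℤ[i]) ^ k := by
      have h1 := dvd_self_pow ha
      rwa [Nat.cast_pow, h2eq, show (π * π * (⟨0,-1⟩ : ℤ[i])) ^ k = π ^ (2 * k) * (⟨0,-1⟩ : ℤ[i]) ^ k from by rw [two_mul, pow_add]; ring] at h1
    obtain ⟨cu, hcu⟩ := hu.pow k
    have hzd2 : z ∣ π ^ (2 * k) := by
      refine hzd.trans ⟨↑cu⁻¹, ?_⟩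
      rw [← hcu, mul_assoc, Units.mul_inv, mul_one]
    obtain ⟨i, hi, hass⟩ := (dvd_prime_pow hπ (2 * k)).mp hzd2
    have hik : i = k := by
      have h3 : (2 : ℕ) ^ k = 2 ^ i := by
        rw [← ha, gnorm_assoc hass, gnorm_pow, hgπ]
      exact (Nat.pow_right_injective le_rfl h3.symm)
    rw [← Associates.mk_pow, Associates.mk_eq_mk_iff_associated]
    rw [hik] at hass
    exact hass
  rw [Ifun, Nat.card_eq_one_iff_unique]
  constructor
  · exact ⟨fun a b => Subtype.ext ((key a.1 a.2).trans (key b.1 b.2).symm)⟩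
  · exact ⟨⟨(Associates.mk π) ^ k, by rw [anorm_pow, anorm_mk, hgπ]⟩⟩

lemma Ifun_three_mod_four_pow (p : ℕ) (pp : p.Prime) (hp3 : p % 4 = 3) (k : ℕ) :
    Ifun (p ^ k) = if Even k then 1 else 0 := by
  haveI : Fact p.Prime := ⟨pp⟩
  have hP : Prime ((p : ℕ) : ℤ[i]) :=
    GaussianInt.prime_of_nat_prime_of_mod_four_eq_three p hp3
  have hgP : gnorm ((p : ℕ) : ℤ[i]) = p * p := gnorm_natCast p
  have key : ∀ a : Associates ℤ[i], anorm a = p ^ k →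
      ∃ i, 2 * i = k ∧ a = (Associates.mk ((p : ℕ) : ℤ[i])) ^ i := by
    intro a ha
    obtain ⟨z, rfl⟩ := Associates.mk_surjective a
    rw [anorm_mk] at ha
    have hzd : z ∣ ((p : ℕ) : ℤ[i]) ^ k := by
      have h1 := dvd_self_pow ha
      rwa [Nat.cast_pow] at h1
    obtain ⟨i, hi, hass⟩ := (dvd_prime_pow hP k).mp hzd
    refine ⟨i, ?_, ?_⟩
    · have h3 : p ^ k = p ^ (2 * i) := by
        rw [← ha, gnorm_assoc hass, gnorm_pow, hgP, ← pow_two, ← pow_mul]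
      exact (Nat.pow_right_injective pp.two_le h3).symm
    · rw [← Associates.mk_pow, Associates.mk_eq_mk_iff_associated]
      exact hass
  rcases Nat.even_or_odd k with he | ho
  · rw [if_pos he]
    rw [Ifun, Nat.card_eq_one_iff_unique]
    obtain ⟨t, ht⟩ := he
    constructor
    · refine ⟨fun a b => Subtype.ext ?_⟩
      obtain ⟨i, hi, hia⟩ := key a.1 a.2
      obtain ⟨j, hj, hjb⟩ := key b.1 b.2
      rw [hia, hjb]
      have : i = j := by omega
      rw [this]
    · refine ⟨⟨(Associates.mk ((p : ℕ) : ℤ[i])) ^ t, ?_⟩⟩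
      rw [anorm_pow, anorm_mk, hgP, ← pow_two, ← pow_mul]
      congr 1
      omega
  · rw [if_neg (Nat.not_even_iff_odd.mpr ho)]
    have : IsEmpty {a : Associates ℤ[i] // anorm a = p ^ k} := by
      refine ⟨fun a => ?_⟩
      obtain ⟨i, hi, _⟩ := key a.1 a.2
      obtain ⟨t, ht⟩ := ho
      omega
    rw [Ifun]
    exact Nat.card_of_isEmpty

lemma Ifun_one_mod_four_pow (p : ℕ) (pp : p.Prime) (hp1 : p % 4 = 1) (k : ℕ) :
    Ifun (p ^ k) = k + 1 := by
  haveI : Fact p.Prime := ⟨pp⟩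
  -- p is not irreducible in ℤ[i]
  have hnotirr : ¬ Irreducible ((p : ℕ) : ℤ[i]) := by
    intro hirr
    have := (GaussianInt.prime_iff_mod_four_eq_three_of_nat_prime p).mp hirr.prime
    omega
  obtain ⟨a, b, hab⟩ := GaussianInt.sq_add_sq_of_nat_prime_of_not_irreducible p hnotirr
  set π : ℤ[i] := ⟨(a : ℤ), (b : ℤ)⟩ with hπdef
  have hgπ : gnorm π = p := by
    have hnorm : π.norm = (p : ℤ) := by
      rw [Zsqrtd.norm_def]
      push_cast [← hab]
      ring
    rw [gnorm, hnorm]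
    simp
  have hπ : Prime π := prime_of_gnorm_prime (by rw [hgπ]; exact pp)
  have hgπ' : gnorm (star π) = p := by rw [gnorm_star, hgπ]
  have hπ' : Prime (star π) := prime_of_gnorm_prime (by rw [hgπ']; exact pp)
  have hpeq : ((p : ℕ) : ℤ[i]) = π * star π := by rw [mul_star_eq, hgπ]
  -- π and star π are not associated
  have hnass : ¬ Associated π (star π) := by
    rintro ⟨u, hu⟩
    rcases unit_val_eq u.isUnit with h | h | h | h <;> rw [h] at hu <;>
      [skip; skip; skip; skip]
    · -- u = 1 : b = 0
      have h1 : -(b : ℤ) = (b : ℤ) := by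
        have := congrArg Zsqrtd.im hu
        simpa [hπdef] using this.symm
      have hb0 : b = 0 := by omega
      rw [hb0] at hab
      have hdvd : a ∣ p := ⟨a, by nlinarith⟩
      rcases pp.eq_one_or_self_of_dvd a hdvd with h2 | h2 <;> simp [h2] at hab <;> nlinarith [pp.one_lt]
    · -- u = -1 : a = 0
      have h1 : (a : ℤ) = -(a : ℤ) := by
        have := congrArg Zsqrtd.re hu
        simpa [hπdef] using this.symm
      have ha0 : a = 0 := by omega
      rw [ha0] at hab
      have hdvd : b ∣ p := ⟨b, by nlinarith⟩
      rcases pp.eq_one_or_self_of_dvd b hdvd with h2 | h2 <;> simp [h2] at hab <;> nlinarith [pp.one_lt]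
    · -- u = i : a = -b
      have h1 : -(b : ℤ) = (a : ℤ) := by
        have := congrArg Zsqrtd.re hu
        simpa [hπdef] using this
      have : a = 0 ∧ b = 0 := by omega
      rw [this.1, this.2] at hab
      simp at hab
      omega
    · -- u = -i : a = b
      have h1 : (b : ℤ) = (a : ℤ) := by
        have := congrArg Zsqrtd.re hu
        simpa [hπdef] using this
      have hba : b = a := by omega
      rw [hba] at hab
      have heven : Even p := ⟨a ^ 2, by omega⟩
      have := (Nat.Prime.even_iff pp).mp heven
      omega
  set P1 := Associates.mk π with hP1
  set P2 := Associates.mk (star π) with hP2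
  have haux : ∀ i j : ℕ, i < j → j ≤ k →
      P1 ^ i * P2 ^ (k - i) ≠ P1 ^ j * P2 ^ (k - j) := by
    intro i j hij hjk heq
    rw [hP1, hP2, ← Associates.mk_pow, ← Associates.mk_pow, ← Associates.mk_pow,
      ← Associates.mk_pow, Associates.mk_mul_mk, Associates.mk_mul_mk,
      Associates.mk_eq_mk_iff_associated] at heq
    obtain ⟨u, hu⟩ := heq
    have hdvd : π ^ i * π ∣ π ^ i * (star π ^ (k - i) * ↑u) := by
      have h1 : π ^ i * π ∣ π ^ j := by
        rw [← pow_succ]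
        exact pow_dvd_pow π hij
      have h2 : π ^ i * (star π ^ (k - i) * ↑u) = π ^ j * star π ^ (k - j) := by
        rw [← hu]; ring
      rw [h2]
      exact h1.trans (Dvd.intro _ rfl)
    have h2 : π ∣ star π ^ (k - i) * ↑u :=
      (mul_dvd_mul_iff_left (pow_ne_zero i hπ.ne_zero)).mp hdvd
    rcases hπ.2.2 _ _ h2 with h3 | h3
    · exact hnass (hπ.irreducible.associated_of_dvd hπ'.irreducible (hπ.dvd_of_dvd_pow h3))
    · exact hπ.not_unit (isUnit_of_dvd_unit h3 u.isUnit)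
  have hΦ : Function.Bijective
      (fun i : Fin (k + 1) =>
        (⟨P1 ^ (i : ℕ) * P2 ^ (k - (i : ℕ)), by
          rw [anorm_mul, hP1, hP2, ← Associates.mk_pow, ← Associates.mk_pow, anorm_mk, anorm_mk,
            gnorm_pow, gnorm_pow, hgπ, hgπ', ← pow_add]
          congr 1
          omega⟩ : {c : Associates ℤ[i] // anorm c = p ^ k})) := by
    constructor
    · intro i j hij
      simp only [Subtype.mk.injEq] at hij
      rcases lt_trichotomy (i : ℕ) (j : ℕ) with h | h | h
      · exact absurd hij (haux _ _ h (by omega))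
      · exact Fin.ext h
      · exact absurd hij.symm (haux _ _ h (by omega))
    · rintro ⟨c, hc⟩
      obtain ⟨z, rfl⟩ := Associates.mk_surjective c
      rw [anorm_mk] at hc
      have hzd : z ∣ π ^ k * star π ^ k := by
        have h1 := dvd_self_pow hc
        rwa [Nat.cast_pow, hpeq, mul_pow] at h1
      obtain ⟨i, j, hi, hj, hass⟩ := dvd_mul_prime_pow hπ hπ' k k z hzd
      have hij : i + j = k := by
        have h3 : p ^ k = p ^ (i + j) := by
          rw [← hc, gnorm_assoc hass, gnorm_mul, gnorm_pow, gnorm_pow, hgπ, hgπ', ← pow_add]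
        exact (Nat.pow_right_injective pp.two_le h3).symm
      refine ⟨⟨i, by omega⟩, ?_⟩
      simp only [Subtype.mk.injEq]
      rw [show k - i = j from by omega, hP1, hP2, ← Associates.mk_pow, ← Associates.mk_pow,
        Associates.mk_mul_mk, Associates.mk_eq_mk_iff_associated]
      exact hass.symm
  have := Nat.card_congr (Equiv.ofBijective _ hΦ)
  rw [Ifun, ← this]
  simp

noncomputable def Sfun (n : ℕ) : ℤ := ∑ d ∈ n.divisors, ZMod.χ₄ (d : ZMod 4)

def chiAF : ArithmeticFunction ℤ :=
  ⟨fun d => ZMod.χ₄ (d : ZMod 4), by simp⟩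

lemma chiAF_mult : chiAF.IsMultiplicative := by
  constructor
  · show ZMod.χ₄ ((1 : ℕ) : ZMod 4) = 1
    simp
  · intro m n _
    show ZMod.χ₄ (((m * n : ℕ)) : ZMod 4) = ZMod.χ₄ (m : ZMod 4) * ZMod.χ₄ (n : ZMod 4)
    push_cast
    rw [map_mul]

lemma Sfun_eq (n : ℕ) : Sfun n = (↑ArithmeticFunction.zeta * chiAF) n := by
  rw [ArithmeticFunction.coe_zeta_mul_apply]
  rfl

lemma Sfun_mult {m n : ℕ} (h : Nat.Coprime m n) : Sfun (m * n) = Sfun m * Sfun n := by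
  rw [Sfun_eq, Sfun_eq, Sfun_eq]
  exact (ArithmeticFunction.isMultiplicative_zeta.natCast.mul chiAF_mult).2 h

lemma Sfun_one : Sfun 1 = 1 := by
  rw [Sfun]
  simp

lemma chi_pow (q i : ℕ) : ZMod.χ₄ ((q ^ i : ℕ) : ZMod 4) = (ZMod.χ₄ (q : ZMod 4)) ^ i := by
  push_cast
  rw [map_pow]

lemma Sfun_pp (p : ℕ) (pp : p.Prime) (k : ℕ) :
    Sfun (p ^ k) = ∑ i ∈ Finset.range (k + 1), (ZMod.χ₄ (p : ZMod 4)) ^ i := by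
  rw [Sfun, Nat.sum_divisors_prime_pow pp]
  exact Finset.sum_congr rfl fun i _ => chi_pow p i

lemma Sfun_two_pow (k : ℕ) : Sfun (2 ^ k) = 1 := by
  rw [Sfun_pp 2 Nat.prime_two]
  have h2 : ZMod.χ₄ ((2 : ℕ) : ZMod 4) = 0 := by decide
  rw [h2]
  rw [Finset.sum_eq_single 0]
  · simp
  · intro i _ hi
    exact zero_pow hi
  · simp

lemma Sfun_one_mod_four_pow (p : ℕ) (pp : p.Prime) (hp1 : p % 4 = 1) (k : ℕ) :
    Sfun (p ^ k) = k + 1 := by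
  rw [Sfun_pp p pp]
  have h1 : ZMod.χ₄ ((p : ℕ) : ZMod 4) = 1 := ZMod.χ₄_nat_one_mod_four hp1
  rw [h1]
  simp

lemma Sfun_three_mod_four_pow (p : ℕ) (pp : p.Prime) (hp3 : p % 4 = 3) (k : ℕ) :
    Sfun (p ^ k) = if Even k then 1 else 0 := by
  rw [Sfun_pp p pp]
  have h1 : ZMod.χ₄ ((p : ℕ) : ZMod 4) = -1 := ZMod.χ₄_nat_three_mod_four hp3
  rw [h1, neg_one_geom_sum]
  rcases Nat.even_or_odd k with he | ho
  · rw [if_pos he, if_neg (by simpa using Nat.even_add_one.not.mpr (by simpa using he))]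
  · rw [if_neg (Nat.not_even_iff_odd.mpr ho), if_pos (Nat.even_add_one.mpr (Nat.not_even_iff_odd.mpr ho))]

lemma Ifun_one : Ifun 1 = 1 := by
  rw [Ifun, Nat.card_eq_one_iff_unique]
  constructor
  · refine ⟨fun a b => Subtype.ext ?_⟩
    have key : ∀ c : {a : Associates ℤ[i] // anorm a = 1}, c.1 = 1 := by
      rintro ⟨c, hc⟩
      obtain ⟨z, rfl⟩ := Associates.mk_surjective c
      rw [anorm_mk] at hc
      exact Associates.mk_eq_one.mpr (gnorm_eq_one.mp hc)
    rw [key a, key b]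
  · refine ⟨⟨1, ?_⟩⟩
    rw [← Associates.mk_one, anorm_mk, gnorm_one]

lemma Ifun_eq_Sfun (n : ℕ) (hn : n ≠ 0) : (Ifun n : ℤ) = Sfun n := by
  have hI : ∀ x y : ℕ, Nat.Coprime x y → ((Ifun (x * y) : ℤ)) = Ifun x * Ifun y := by
    intro x y hxy
    rcases Nat.eq_zero_or_pos x with rfl | hx
    · have : y = 1 := by simpa using hxy
      subst this
      simp [Ifun_one]
    rcases Nat.eq_zero_or_pos y with rfl | hy
    · have : x = 1 := by simpa using hxy
      subst this
      simp [Ifun_one]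
    rw [Ifun_mul hxy hx hy]
    push_cast
    ring
  have h1 := Nat.multiplicative_factorization (fun n => (Ifun n : ℤ)) hI (by simp [Ifun_one]) hn
  have h2 := Nat.multiplicative_factorization Sfun (fun x y h => Sfun_mult h) Sfun_one hn
  rw [h2]
  refine Eq.trans h1 ?_
  apply Finsupp.prod_congr
  intro p hp
  have pp : p.Prime := Nat.prime_of_mem_primeFactors (by simpa using hp)
  show (Ifun (p ^ _) : ℤ) = Sfun (p ^ _)
  rcases pp.eq_two_or_odd with rfl | hodd
  · rw [Sfun_two_pow, Ifun_two_pow]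
    simp
  · have h4 : p % 4 = 1 ∨ p % 4 = 3 := by omega
    rcases h4 with h41 | h43
    · rw [Sfun_one_mod_four_pow p pp h41, Ifun_one_mod_four_pow p pp h41]
      push_cast
      ring
    · rw [Sfun_three_mod_four_pow p pp h43, Ifun_three_mod_four_pow p pp h43]
      split_ifs <;> simp

lemma gnorm_eq_iff {a b : ℤ} {n : ℕ} :
    gnorm ⟨a, b⟩ = n ↔ a ^ 2 + b ^ 2 = (n : ℤ) := by
  have hnorm : (⟨a, b⟩ : ℤ[i]).norm = a ^ 2 + b ^ 2 := by
    rw [Zsqrtd.norm_def]; ring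
  constructor
  · intro h
    rw [← hnorm, ← gnorm_coe, h]
  · intro h
    have h2 : ((gnorm (⟨a, b⟩ : ℤ[i]) : ℕ) : ℤ) = (n : ℤ) := by rw [gnorm_coe, hnorm, h]
    exact_mod_cast h2

theorem sum_two_squares_count (n : ℕ) (hn : 1 ≤ n) :
    (Nat.card {p : ℤ × ℤ // p.1 ^ 2 + p.2 ^ 2 = (n : ℤ)} : ℤ) =
      4 * ∑ d ∈ n.divisors, ZMod.χ₄ (d : ZMod 4) := by
  have e : {p : ℤ × ℤ // p.1 ^ 2 + p.2 ^ 2 = (n : ℤ)} ≃ {z : ℤ[i] // gnorm z = n} :=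
    { toFun := fun p => ⟨⟨p.1.1, p.1.2⟩, gnorm_eq_iff.mpr p.2⟩
      invFun := fun z => ⟨(z.1.re, z.1.im), gnorm_eq_iff.mp z.2⟩
      left_inv := fun p => rfl
      right_inv := fun z => rfl }
  have h1 : Nat.card {p : ℤ × ℤ // p.1 ^ 2 + p.2 ^ 2 = (n : ℤ)} = 4 * Ifun n :=
    (Nat.card_congr e).trans (card_reps n hn)
  rw [h1]
  push_cast
  rw [Ifun_eq_Sfun n (by omega)]
  rfl
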